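/- arXiv:1011.6032 — 5 statements merged into one kernel-verified Lean document; each statement's English description precedes it below -/
import Mathlib

section
/- For the harmonic-potential transport solution f(t,x,v) = f⁰(x cos t - v sin t, v cos t + x sin t), one has for all t with sin t ≠ 0 the mixing estimate sup_x ∫ |f(t,x,v)| dv ≤ |sin t|^{-d} ∫ sup_v |f⁰(x,v)| dx. -/
open MeasureTheory Real
open scoped ENNReal NNReal

/-! Bounding `f⁰(y, ·)` by its supremum `G(y)` over velocities leaves the integral of
`v ↦ G(x cos t - v sin t)`; a translation followed by the scaling `v ↦ -(sin t) • v`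
turns it into `|sin t|^{-d} ∫ G`, since scaling by `r` multiplies Haar measure on an
`n`-dimensional space by `|r|^n`. -/

section AddHaar

variable {E : Type*} [NormedAddCommGroup E] [NormedSpace ℝ E] [MeasurableSpace E]
  [BorelSpace E] [FiniteDimensional ℝ E] (μ : Measure E) [μ.IsAddHaarMeasure]

theorem MeasureTheory.Measure.lintegral_comp_smul (g : E → ℝ≥0∞) {r : ℝ} (hr : r ≠ 0) :
    ∫⁻ v, g (r • v) ∂μ = ENNReal.ofReal |(r ^ Module.finrank ℝ E)⁻¹| * ∫⁻ v, g v ∂μ := by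
  rw [← (measurableEmbedding_const_smul₀ hr).lintegral_map, Measure.map_addHaar_smul μ hr,
    lintegral_smul_measure, smul_eq_mul]

theorem MeasureTheory.Measure.lintegral_comp_add_smul (g : E → ℝ≥0∞) (b : E) {r : ℝ}
    (hr : r ≠ 0) :
    ∫⁻ v, g (b + r • v) ∂μ = ENNReal.ofReal |(r ^ Module.finrank ℝ E)⁻¹| * ∫⁻ v, g v ∂μ := by
  rw [μ.lintegral_comp_smul (fun u => g (b + u)) hr, lintegral_add_left_eq_self g b]

end AddHaar

theorem harmonic_transport_mixing_general (d : ℕ)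
    (f0 : EuclideanSpace ℝ (Fin d) → EuclideanSpace ℝ (Fin d) → ℝ) :
    ∀ t : ℝ, Real.sin t ≠ 0 → ∀ x : EuclideanSpace ℝ (Fin d),
      ∫⁻ v, (‖f0 (Real.cos t • x - Real.sin t • v) (Real.cos t • v + Real.sin t • x)‖₊ : ℝ≥0∞)
        ≤ ENNReal.ofReal (|Real.sin t| ^ (-(d : ℤ))) * ∫⁻ z, ⨆ w, (‖f0 z w‖₊ : ℝ≥0∞) := by
  intro t hsin x
  have hjac : |((-Real.sin t) ^ Module.finrank ℝ (EuclideanSpace ℝ (Fin d)))⁻¹|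
      = |Real.sin t| ^ (-(d : ℤ)) := by
    rw [finrank_euclideanSpace_fin, abs_inv, abs_pow, abs_neg, zpow_neg, zpow_natCast]
  calc ∫⁻ v, (‖f0 (Real.cos t • x - Real.sin t • v) (Real.cos t • v + Real.sin t • x)‖₊ : ℝ≥0∞)
      ≤ ∫⁻ v, ⨆ w, (‖f0 (Real.cos t • x + (-Real.sin t) • v) w‖₊ : ℝ≥0∞) := by
        refine lintegral_mono fun v => ?_
        rw [neg_smul, ← sub_eq_add_neg]
        exact le_iSup (fun w => (‖f0 _ w‖₊ : ℝ≥0∞)) _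
    _ = ENNReal.ofReal (|Real.sin t| ^ (-(d : ℤ))) * ∫⁻ z, ⨆ w, (‖f0 z w‖₊ : ℝ≥0∞) := by
        rw [volume.lintegral_comp_add_smul (fun z => ⨆ w, (‖f0 z w‖₊ : ℝ≥0∞)) _
          (neg_ne_zero.mpr hsin), hjac]

/-- Mixing estimate for the harmonic-potential transport solution
`f(t,x,v) = f⁰(x cos t - v sin t, v cos t + x sin t)`: for `sin t ≠ 0`,
`sup_x ∫ |f(t,x,v)| dv ≤ |sin t|^{-d} ∫ sup_v |f⁰(x,v)| dx`. -/
theorem harmonic_transport_mixing (d : ℕ) (hd : 1 ≤ d)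
    (f0 : EuclideanSpace ℝ (Fin d) → EuclideanSpace ℝ (Fin d) → ℝ)
    (hf0 : Measurable (fun p : EuclideanSpace ℝ (Fin d) × EuclideanSpace ℝ (Fin d) =>
      f0 p.1 p.2))
    (hG : Measurable (fun z : EuclideanSpace ℝ (Fin d) =>
      ⨆ w : EuclideanSpace ℝ (Fin d), (‖f0 z w‖₊ : ℝ≥0∞)))
    (hGfin : ∫⁻ z, ⨆ w, (‖f0 z w‖₊ : ℝ≥0∞) ≠ ⊤) :
    ∀ t : ℝ, Real.sin t ≠ 0 → ∀ x : EuclideanSpace ℝ (Fin d),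
      ∫⁻ v, (‖f0 (Real.cos t • x - Real.sin t • v) (Real.cos t • v + Real.sin t • x)‖₊ : ℝ≥0∞)
        ≤ ENNReal.ofReal (|Real.sin t| ^ (-(d : ℤ))) * ∫⁻ z, ⨆ w, (‖f0 z w‖₊ : ℝ≥0∞) :=
  harmonic_transport_mixing_general d f0
end

section
/- The function f(t,x,v) := f⁰(x cosh t - v sinh t, v cosh t - x sinh t) solves the transport equation ∂_t f + v·∇_x f + x·∇_v f = 0 with initial data f⁰, and satisfies for all t > 0 the dispersion estimate sup_x ∫ |f(t,x,v)| dv ≤ (2/(e^t - e^{-t}))^d ∫ sup_v |f⁰(x,v)| dx. -/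
open MeasureTheory Real
open scoped ENNReal NNReal

/-- `f(t,x,v) := f⁰(x cosh t - v sinh t, v cosh t - x sinh t)` solves
`∂ₜ f + v·∇ₓ f + x·∇_v f = 0` with initial data `f⁰`, and satisfies the dispersion
estimate `sup_x ∫ |f(t,x,v)| dv ≤ (2/(eᵗ - e⁻ᵗ))^d ∫ sup_v |f⁰(x,v)| dx` for `t > 0`. -/
theorem repulsive_transport_solution_and_dispersion (d : ℕ) (hd : 1 ≤ d)
    (f0 : EuclideanSpace ℝ (Fin d) × EuclideanSpace ℝ (Fin d) → ℝ)
    (hf0 : ContDiff ℝ 1 f0)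
    (hG : Measurable (fun z : EuclideanSpace ℝ (Fin d) =>
      ⨆ w : EuclideanSpace ℝ (Fin d), (‖f0 (z, w)‖₊ : ℝ≥0∞)))
    (hGfin : ∫⁻ z, ⨆ w, (‖f0 (z, w)‖₊ : ℝ≥0∞) ≠ ⊤)
    (f : ℝ → EuclideanSpace ℝ (Fin d) → EuclideanSpace ℝ (Fin d) → ℝ)
    (hf : ∀ t x v, f t x v = f0 (Real.cosh t • x - Real.sinh t • v,
      Real.cosh t • v - Real.sinh t • x)) :
    (∀ x v, f 0 x v = f0 (x, v)) ∧
    (∀ t x v,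
      deriv (fun s => f s x v) t
        + fderiv ℝ (fun y => f t y v) x v
        + fderiv ℝ (fun w => f t x w) v x = 0) ∧
    (∀ t : ℝ, 0 < t → ∀ x,
      ∫⁻ v, (‖f t x v‖₊ : ℝ≥0∞)
        ≤ ENNReal.ofReal ((2 / (Real.exp t - Real.exp (-t))) ^ d)
            * ∫⁻ z, ⨆ w, (‖f0 (z, w)‖₊ : ℝ≥0∞)) := by
  have hdiff : Differentiable ℝ f0 := hf0.differentiable one_ne_zero
  refine ⟨?_, ?_, ?_⟩
  · intro x v
    simp [hf]
  · intro t x v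
    set p : EuclideanSpace ℝ (Fin d) × EuclideanSpace ℝ (Fin d) := (Real.cosh t • x - Real.sinh t • v,
      Real.cosh t • v - Real.sinh t • x) with hp
    set D := fderiv ℝ f0 p with hD
    -- time derivative
    have hcurve : HasDerivAt
        (fun s => ((Real.cosh s • x - Real.sinh s • v,
          Real.cosh s • v - Real.sinh s • x) : EuclideanSpace ℝ (Fin d) × EuclideanSpace ℝ (Fin d)))
        ((Real.sinh t • x - Real.cosh t • v, Real.sinh t • v - Real.cosh t • x)) t := by
      exact (((Real.hasDerivAt_cosh t).smul_const x).sub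
          ((Real.hasDerivAt_sinh t).smul_const v)).prodMk
        (((Real.hasDerivAt_cosh t).smul_const v).sub
          ((Real.hasDerivAt_sinh t).smul_const x))
    have hdt : deriv (fun s => f s x v) t
        = D (Real.sinh t • x - Real.cosh t • v, Real.sinh t • v - Real.cosh t • x) := by
      have : (fun s => f s x v) = fun s => f0 (Real.cosh s • x - Real.sinh s • v,
          Real.cosh s • v - Real.sinh s • x) := by
        funext s; exact hf s x v
      rw [this]
      exact (((hdiff p).hasFDerivAt.comp_hasDerivAt t hcurve)).deriv
    -- x derivative
    have hLx : HasFDerivAt (fun y : EuclideanSpace ℝ (Fin d) => ((Real.cosh t • y - Real.sinh t • v,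
          Real.cosh t • v - Real.sinh t • y) : EuclideanSpace ℝ (Fin d) × EuclideanSpace ℝ (Fin d)))
        (((Real.cosh t • ContinuousLinearMap.id ℝ (EuclideanSpace ℝ (Fin d))).prod
          (-(Real.sinh t • ContinuousLinearMap.id ℝ (EuclideanSpace ℝ (Fin d)))))) x := by
      exact (((hasFDerivAt_id x).const_smul (Real.cosh t)).sub_const _).prodMk
        (((hasFDerivAt_id x).const_smul (Real.sinh t)).const_sub _)
    have hdx : fderiv ℝ (fun y => f t y v) x v
        = D (Real.cosh t • v, -(Real.sinh t • v)) := by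
      have h1 : (fun y => f t y v) = fun y => f0 (Real.cosh t • y - Real.sinh t • v,
          Real.cosh t • v - Real.sinh t • y) := by
        funext y; exact hf t y v
      have hcomp : HasFDerivAt (fun y => f0 (Real.cosh t • y - Real.sinh t • v,
          Real.cosh t • v - Real.sinh t • y))
          (D.comp ((Real.cosh t • ContinuousLinearMap.id ℝ (EuclideanSpace ℝ (Fin d))).prod
            (-(Real.sinh t • ContinuousLinearMap.id ℝ (EuclideanSpace ℝ (Fin d)))))) x :=
        (hdiff p).hasFDerivAt.comp x hLx
      rw [h1, hcomp.fderiv]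
      simp
    -- v derivative
    have hLv : HasFDerivAt (fun w : EuclideanSpace ℝ (Fin d) => ((Real.cosh t • x - Real.sinh t • w,
          Real.cosh t • w - Real.sinh t • x) : EuclideanSpace ℝ (Fin d) × EuclideanSpace ℝ (Fin d)))
        (((-(Real.sinh t • ContinuousLinearMap.id ℝ (EuclideanSpace ℝ (Fin d)))).prod
          (Real.cosh t • ContinuousLinearMap.id ℝ (EuclideanSpace ℝ (Fin d))))) v := by
      exact (((hasFDerivAt_id v).const_smul (Real.sinh t)).const_sub _).prodMk
        (((hasFDerivAt_id v).const_smul (Real.cosh t)).sub_const _)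
    have hdv : fderiv ℝ (fun w => f t x w) v x
        = D (-(Real.sinh t • x), Real.cosh t • x) := by
      have h1 : (fun w => f t x w) = fun w => f0 (Real.cosh t • x - Real.sinh t • w,
          Real.cosh t • w - Real.sinh t • x) := by
        funext w; exact hf t x w
      have hcomp : HasFDerivAt (fun w => f0 (Real.cosh t • x - Real.sinh t • w,
          Real.cosh t • w - Real.sinh t • x))
          (D.comp (((-(Real.sinh t • ContinuousLinearMap.id ℝ (EuclideanSpace ℝ (Fin d))))).prod
            (Real.cosh t • ContinuousLinearMap.id ℝ (EuclideanSpace ℝ (Fin d))))) v :=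
        (hdiff p).hasFDerivAt.comp v hLv
      rw [h1, hcomp.fderiv]
      simp
    rw [hdt, hdx, hdv, ← D.map_add, ← D.map_add]
    have hz : ((Real.sinh t • x - Real.cosh t • v, Real.sinh t • v - Real.cosh t • x) : EuclideanSpace ℝ (Fin d) × EuclideanSpace ℝ (Fin d))
        + (Real.cosh t • v, -(Real.sinh t • v)) + (-(Real.sinh t • x), Real.cosh t • x)
        = 0 := by
      rw [Prod.ext_iff]
      constructor <;> simp <;> abel
    rw [hz, D.map_zero]
  · intro t ht x
    have hsinh : 0 < Real.sinh t := Real.sinh_pos_iff.mpr ht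
    set G : EuclideanSpace ℝ (Fin d) → ℝ≥0∞ := fun z => ⨆ w : EuclideanSpace ℝ (Fin d), (‖f0 (z, w)‖₊ : ℝ≥0∞) with hGdef
    have step1 : ∫⁻ v, (‖f t x v‖₊ : ℝ≥0∞)
        ≤ ∫⁻ v, G (Real.cosh t • x - Real.sinh t • v) := by
      refine lintegral_mono fun v => ?_
      rw [hf]
      exact le_iSup (fun w => ((‖f0 (Real.cosh t • x - Real.sinh t • v, w)‖₊ : ℝ≥0∞)))
        (Real.cosh t • v - Real.sinh t • x)
    set H : EuclideanSpace ℝ (Fin d) → ℝ≥0∞ := fun u => G (Real.cosh t • x + u) with hHdef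
    have hHmeas : Measurable H := hG.comp (measurable_const_add _)
    have step2 : ∫⁻ v, G (Real.cosh t • x - Real.sinh t • v)
        = ∫⁻ v, H ((-Real.sinh t) • v) := by
      refine lintegral_congr fun v => ?_
      simp only [hHdef, neg_smul, ← sub_eq_add_neg]
    have step3 : ∫⁻ v, H ((-Real.sinh t) • v)
        = ENNReal.ofReal |((-Real.sinh t) ^ d)⁻¹| * ∫⁻ u, H u := by
      have hne : (-Real.sinh t) ≠ 0 := neg_ne_zero.mpr hsinh.ne'
      rw [← lintegral_map hHmeas (measurable_const_smul _),
        Measure.map_addHaar_smul volume hne, lintegral_smul_measure,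
        finrank_euclideanSpace_fin]
      rfl
    have step4 : ∫⁻ u, H u = ∫⁻ z, G z := by
      exact lintegral_add_left_eq_self G (Real.cosh t • x)
    have hconst : ENNReal.ofReal |((-Real.sinh t) ^ d)⁻¹|
        = ENNReal.ofReal ((2 / (Real.exp t - Real.exp (-t))) ^ d) := by
      congr 1
      rw [Real.sinh_eq]
      rw [abs_inv, abs_pow, abs_neg, abs_of_pos (by rw [Real.sinh_eq] at hsinh; linarith), ← inv_pow]
      congr 1
      field_simp
    calc ∫⁻ v, (‖f t x v‖₊ : ℝ≥0∞)
        ≤ ∫⁻ v, G (Real.cosh t • x - Real.sinh t • v) := step1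
      _ = ENNReal.ofReal ((2 / (Real.exp t - Real.exp (-t))) ^ d) * ∫⁻ z, G z := by
          rw [step2, step3, step4, hconst]
end

section
/- Let F : ℝ^d → ℝ^d be Lipschitz with constant L and let X(-t;x,v) be the backward characteristic flow of (v,F). Then for all t ≥ 0 and all v, v' ∈ ℝ^d: |X(-t;x,v') - X(-t;x,v)| ≥ |v - v'| (t - L ∫₀^t (t-s) s e^{L s²/2} ds). -/
/-!
Put `D(s) = X(-s;x,v') - X(-s;x,v)`. Then `D(0) = 0`, `D'(0) = v - v'` and `‖D''‖ ≤ L ‖D‖`.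
Taylor's formula with integral remainder, `D(t) = t D'(0) + ∫₀ᵗ (t - s) D''(s) ds`, reduces the
lower bound to the upper bound `‖D(s)‖ ≤ ‖D'(0)‖ s e^{L s²/2}`. For the latter, `g(s) = ∫₀ˢ ‖D'‖`
dominates `‖D‖` and satisfies `g' ≤ ‖D'(0)‖ + L s g`; the integrating factor `e^{-L s²/2}` turns
this into `(g e^{-L s²/2})' ≤ ‖D'(0)‖`.
-/

open Real intervalIntegral
open scoped NNReal

theorem le_mul_mul_exp_of_deriv_le_add_mul {g g' : ℝ → ℝ} {c K : ℝ} (hc : 0 ≤ c) (hK : 0 ≤ K)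
    (hg : ∀ s, HasDerivAt g (g' s) s) (hg0 : g 0 = 0)
    (hg' : ∀ s, 0 ≤ s → g' s ≤ c + K * s * g s) {s : ℝ} (hs : 0 ≤ s) :
    g s ≤ c * s * exp (K * s ^ 2 / 2) := by
  set w : ℝ → ℝ := fun u => exp (-(K * u ^ 2 / 2))
  have hw : ∀ u, HasDerivAt w (w u * -(K * u)) u := fun u =>
    ((((hasDerivAt_pow 2 u).const_mul K).div_const 2).fun_neg.exp).congr_deriv (by simp [w]; ring)
  have hgw : ∀ u, HasDerivAt (fun u => g u * w u) ((g' u - K * u * g u) * w u) u := fun u =>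
    ((hg u).mul (hw u)).congr_deriv (by ring)
  have hle : ∀ u ∈ interior (Set.Ici (0:ℝ)), deriv (fun u => g u * w u) u ≤ c := by
    intro u hu
    rw [interior_Ici] at hu
    have hw1 : w u ≤ 1 := exp_le_one_iff.2 (by nlinarith [sq_nonneg u, hu.out.le])
    rw [(hgw u).deriv]
    calc (g' u - K * u * g u) * w u ≤ c * w u := by
          gcongr
          linarith [hg' u hu.out.le]
      _ ≤ c := mul_le_of_le_one_right hc hw1
  have hmvt := (convex_Ici 0).image_sub_le_mul_sub_of_deriv_le
    (fun u _ => (hgw u).continuousAt.continuousWithinAt)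
    (fun u _ => (hgw u).differentiableAt.differentiableWithinAt) hle 0 Set.self_mem_Ici s hs hs
  have hws : w s * exp (K * s ^ 2 / 2) = 1 := by simp [w, ← exp_add]
  simp only [hg0, zero_mul, sub_zero] at hmvt
  calc g s = g s * w s * exp (K * s ^ 2 / 2) := by rw [mul_assoc, hws, mul_one]
    _ ≤ c * s * exp (K * s ^ 2 / 2) := by gcongr

section SecondOrder

variable {E : Type*} [NormedAddCommGroup E] [NormedSpace ℝ E] [CompleteSpace E]
  {D U R : ℝ → E}

theorem eq_add_smul_add_integral_sub_smul (hD : ∀ s, HasDerivAt D (U s) s)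
    (hU : ∀ s, HasDerivAt U (R s) s) (hR : Continuous R) (t : ℝ) :
    D t = D 0 + t • U 0 + ∫ s in (0:ℝ)..t, (t - s) • R s := by
  have hUc : Continuous U := continuous_iff_continuousAt.2 fun s => (hU s).continuousAt
  have hparts := integral_smul_deriv_eq_deriv_smul (u := fun s => t - s) (u' := fun _ => -1)
    (fun s _ => (hasDerivAt_id s).const_sub t) (fun s _ => hU s)
    intervalIntegrable_const (hR.intervalIntegrable 0 t)
  have hftc := integral_eq_sub_of_hasDerivAt (fun s _ => hD s) (hUc.intervalIntegrable 0 t)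
  simp only [sub_self, zero_smul, sub_zero, neg_smul, one_smul,
    intervalIntegral.integral_neg] at hparts
  rw [hparts, hftc]
  abel

variable {L : ℝ≥0}

theorem norm_le_of_norm_deriv2_le_mul_norm (hD : ∀ s, HasDerivAt D (U s) s)
    (hU : ∀ s, HasDerivAt U (R s) s) (hR : Continuous R) (hRD : ∀ s, ‖R s‖ ≤ L * ‖D s‖)
    (hD0 : D 0 = 0) {s : ℝ} (hs : 0 ≤ s) :
    ‖D s‖ ≤ ‖U 0‖ * s * exp (L * s ^ 2 / 2) := by
  have hUc : Continuous U := continuous_iff_continuousAt.2 fun s => (hU s).continuousAt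
  set g : ℝ → ℝ := fun u => ∫ r in (0:ℝ)..u, ‖U r‖
  have hg : ∀ u, HasDerivAt g ‖U u‖ u := fun u =>
    (hUc.norm.integral_hasStrictDerivAt 0 u).hasDerivAt
  have hDg : ∀ u, 0 ≤ u → ‖D u‖ ≤ g u := fun u hu => by
    rw [← sub_zero (D u), ← hD0,
      ← integral_eq_sub_of_hasDerivAt (fun r _ => hD r) (hUc.intervalIntegrable 0 u)]
    exact norm_integral_le_integral_norm hu
  have hg_mono : ∀ r u, 0 ≤ r → r ≤ u → g r ≤ g u := fun r u hr hru =>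
    integral_mono_interval le_rfl hr hru (Filter.Eventually.of_forall fun _ => norm_nonneg _)
      (hUc.norm.intervalIntegrable 0 u)
  have hUg : ∀ u, 0 ≤ u → ‖U u‖ ≤ ‖U 0‖ + L * u * g u := fun u hu => by
    have hint : ‖∫ r in (0:ℝ)..u, R r‖ ≤ L * g u * |u - 0| :=
      norm_integral_le_of_norm_le_const fun r hr => by
        rw [Set.uIoc_of_le hu] at hr
        exact (hRD r).trans (by gcongr; exact (hDg r hr.1.le).trans (hg_mono r u hr.1.le hr.2))
    rw [← sub_add_cancel (U u) (U 0),
      ← integral_eq_sub_of_hasDerivAt (fun r _ => hU r) (hR.intervalIntegrable 0 u)]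
    rw [sub_zero, abs_of_nonneg hu] at hint
    linarith [norm_add_le (∫ r in (0:ℝ)..u, R r) (U 0)]
  calc ‖D s‖ ≤ g s := hDg s hs
    _ ≤ ‖U 0‖ * s * exp (L * s ^ 2 / 2) :=
      le_mul_mul_exp_of_deriv_le_add_mul (norm_nonneg _) L.coe_nonneg hg (by simp [g]) hUg hs

theorem le_norm_of_norm_deriv2_le_mul_norm (hD : ∀ s, HasDerivAt D (U s) s)
    (hU : ∀ s, HasDerivAt U (R s) s) (hR : Continuous R) (hRD : ∀ s, ‖R s‖ ≤ L * ‖D s‖)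
    (hD0 : D 0 = 0) {t : ℝ} (ht : 0 ≤ t) :
    ‖U 0‖ * (t - L * ∫ s in (0:ℝ)..t, (t - s) * s * exp (L * s ^ 2 / 2)) ≤ ‖D t‖ := by
  have hcont : Continuous fun s => (t - s) * (L * (‖U 0‖ * s * exp (L * s ^ 2 / 2))) := by
    fun_prop
  have hrem : ‖∫ s in (0:ℝ)..t, (t - s) • R s‖
      ≤ ‖U 0‖ * (L * ∫ s in (0:ℝ)..t, (t - s) * s * exp (L * s ^ 2 / 2)) := by
    have hint_eq : ∫ s in (0:ℝ)..t, (t - s) * (L * (‖U 0‖ * s * exp (L * s ^ 2 / 2)))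
        = ‖U 0‖ * (L * ∫ s in (0:ℝ)..t, (t - s) * s * exp (L * s ^ 2 / 2)) := by
      rw [← intervalIntegral.integral_const_mul, ← intervalIntegral.integral_const_mul]
      exact integral_congr fun s _ => by ring
    refine (norm_integral_le_of_norm_le ht (Filter.Eventually.of_forall fun s hs => ?_)
      (hcont.intervalIntegrable 0 t)).trans_eq hint_eq
    rw [norm_smul, Real.norm_of_nonneg (sub_nonneg.2 hs.2)]
    gcongr
    · linarith [hs.2]
    · exact (hRD s).trans
        (by gcongr; exact norm_le_of_norm_deriv2_le_mul_norm hD hU hR hRD hD0 hs.1.le)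
  rw [eq_add_smul_add_integral_sub_smul hD hU hR t, hD0, zero_add]
  have hnorm_smul : ‖t • U 0‖ = ‖U 0‖ * t := by rw [norm_smul, Real.norm_of_nonneg ht, mul_comm]
  have htri := norm_sub_le (t • U 0 + ∫ s in (0:ℝ)..t, (t - s) • R s)
    (∫ s in (0:ℝ)..t, (t - s) • R s)
  rw [add_sub_cancel_right] at htri
  linarith

end SecondOrder

theorem characteristics_separation_lower_general (d : ℕ)
    (F : EuclideanSpace ℝ (Fin d) → EuclideanSpace ℝ (Fin d)) (L : ℝ≥0)
    (hF : LipschitzWith L F)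
    (X V : ℝ → EuclideanSpace ℝ (Fin d) → EuclideanSpace ℝ (Fin d) → EuclideanSpace ℝ (Fin d))
    (hX0 : ∀ x v, X 0 x v = x) (hV0 : ∀ x v, V 0 x v = v)
    (hX' : ∀ t x v, HasDerivAt (fun s => X s x v) (V t x v) t)
    (hV' : ∀ t x v, HasDerivAt (fun s => V s x v) (F (X t x v)) t) :
    ∀ (x v v' : EuclideanSpace ℝ (Fin d)) (t : ℝ), 0 ≤ t →
      ‖v - v'‖ * (t - (L : ℝ) * ∫ s in (0:ℝ)..t, (t - s) * s * Real.exp ((L : ℝ) * s ^ 2 / 2))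
        ≤ ‖X (-t) x v' - X (-t) x v‖ := by
  intro x v v' t ht
  have hX_back : ∀ w s, HasDerivAt (fun r => X (-r) x w) (-V (-s) x w) s := fun w s => by
    simpa [Function.comp_def] using (hX' (-s) x w).scomp s (hasDerivAt_neg s)
  have hV_back : ∀ w s, HasDerivAt (fun r => -V (-r) x w) (F (X (-s) x w)) s := fun w s => by
    simpa [Function.comp_def] using ((hV' (-s) x w).scomp s (hasDerivAt_neg s)).fun_neg
  have hX_cont : ∀ w, Continuous fun r => X (-r) x w := fun w =>
    continuous_iff_continuousAt.2 fun s => (hX_back w s).continuousAt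
  have hsep := le_norm_of_norm_deriv2_le_mul_norm (fun s => (hX_back v' s).fun_sub (hX_back v s))
    (fun s => (hV_back v' s).fun_sub (hV_back v s))
    ((hF.continuous.comp (hX_cont v')).sub (hF.continuous.comp (hX_cont v)))
    (fun s => by simpa only [← dist_eq_norm] using hF.dist_le_mul _ _) (by simp [hX0]) ht
  simpa [hV0, neg_add_eq_sub] using hsep

/-- Lower bound on the velocity-separation of backward characteristics:
`|X(-t;x,v') - X(-t;x,v)| ≥ |v - v'| (t - L ∫₀ᵗ (t-s) s e^{L s²/2} ds)` for `t ≥ 0`. -/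
theorem characteristics_separation_lower (d : ℕ) (hd : 1 ≤ d)
    (F : EuclideanSpace ℝ (Fin d) → EuclideanSpace ℝ (Fin d)) (L : ℝ≥0)
    (hF : LipschitzWith L F)
    (X V : ℝ → EuclideanSpace ℝ (Fin d) → EuclideanSpace ℝ (Fin d) → EuclideanSpace ℝ (Fin d))
    (hX0 : ∀ x v, X 0 x v = x) (hV0 : ∀ x v, V 0 x v = v)
    (hX' : ∀ t x v, HasDerivAt (fun s => X s x v) (V t x v) t)
    (hV' : ∀ t x v, HasDerivAt (fun s => V s x v) (F (X t x v)) t) :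
    ∀ (x v v' : EuclideanSpace ℝ (Fin d)) (t : ℝ), 0 ≤ t →
      ‖v - v'‖ * (t - (L : ℝ) * ∫ s in (0:ℝ)..t, (t - s) * s * Real.exp ((L : ℝ) * s ^ 2 / 2))
        ≤ ‖X (-t) x v' - X (-t) x v‖ :=
  characteristics_separation_lower_general d F L hF X V hX0 hV0 hX' hV'
end

section
/- Let F : ℝ^d → ℝ^d be Lipschitz with constant L. There exists τ₀ > 0, depending only on L, such that for all t with 0 < t ≤ τ₀ and all x, the map v ↦ X(-t;x,v) is injective; more precisely |X(-t;x,v') - X(-t;x,v)| ≥ (t/2)|v - v'| for all v, v'. -/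
/-!
Reversing time turns `s ↦ X(-s;x,v)` into a forward characteristic with initial velocity `-v`.
For two characteristics leaving the same point with velocity difference `w`, Grönwall's
inequality for the first-order system `(X, V)' = (V, F X)`, whose field is `max 1 L`-Lipschitz,
gives `|X₁ - X₂| ≤ |w| e^{K t}` with `K = max 1 L`. Integrating `V' = F X` twice then yields
`|X₁ t - X₂ t - t w| ≤ L |w| e^{K t} t²`, which is at most `t |w| / 2` as soon as
`L t e^{K t} ≤ 1/2`; `τ₀ = 1 / (2 K e^K)` ensures this.
-/

open Real Set
open scoped NNReal

theorem LipschitzWith.secondOrderField {α : Type*} [PseudoEMetricSpace α] {F : α → α} {L : ℝ≥0}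
    (hF : LipschitzWith L F) : LipschitzWith (max 1 L) fun p : α × α => (p.2, F p.1) := by
  simpa [max_comm] using (LipschitzWith.prod_snd).prodMk (hF.comp LipschitzWith.prod_fst)

section

variable {E : Type*} [NormedAddCommGroup E] [NormedSpace ℝ E]

theorem norm_image_sub_sub_smul_le_of_hasDerivWithinAt {f g g' : ℝ → E} {a b M : ℝ}
    (hab : a ≤ b) (hf : ∀ s ∈ Icc a b, HasDerivWithinAt f (g s) (Icc a b) s)
    (hg : ∀ s ∈ Icc a b, HasDerivWithinAt g (g' s) (Icc a b) s)
    (hg' : ∀ s ∈ Ico a b, ‖g' s‖ ≤ M) :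
    ‖f b - f a - (b - a) • g a‖ ≤ M * (b - a) ^ 2 := by
  rcases hab.eq_or_lt with rfl | hab
  · simp
  have hM : 0 ≤ M := (norm_nonneg _).trans (hg' a ⟨le_rfl, hab⟩)
  have hg_dev : ∀ s ∈ Ico a b, ‖g s - g a‖ ≤ M * (b - a) := fun s hs =>
    (norm_image_sub_le_of_norm_deriv_le_segment' hg hg' s (Ico_subset_Icc_self hs)).trans
      (by gcongr; exact hs.2.le)
  have hrem : ∀ s ∈ Icc a b,
      HasDerivWithinAt (fun s => f s - (s - a) • g a) (g s - g a) (Icc a b) s := fun s hs =>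
    ((hf s hs).sub (((hasDerivWithinAt_id s _).sub_const a).smul_const (g a))).congr_deriv
      (by simp)
  have := norm_image_sub_le_of_norm_deriv_le_segment' hrem hg_dev b ⟨hab.le, le_rfl⟩
  simpa [sq, sub_right_comm, mul_assoc] using this

def IsCharacteristic (F : E → E) (X V : ℝ → E) : Prop :=
  ∀ t, HasDerivAt X (V t) t ∧ HasDerivAt V (F (X t)) t

namespace IsCharacteristic

variable {F : E → E} {X V X₁ V₁ X₂ V₂ : ℝ → E}

theorem comp_neg (h : IsCharacteristic F X V) :
    IsCharacteristic F (fun s => X (-s)) (fun s => -V (-s)) := fun t => by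
  constructor
  · exact ((h (-t)).1.scomp t (hasDerivAt_neg t)).congr_deriv (by simp)
  · exact ((h (-t)).2.scomp t (hasDerivAt_neg t)).neg.congr_deriv (by simp)

theorem hasDerivAt_prodMk (h : IsCharacteristic F X V) (t : ℝ) :
    HasDerivAt (fun s => (X s, V s)) (V t, F (X t)) t :=
  (h t).1.prodMk (h t).2

theorem dist_le {L : ℝ≥0} (hF : LipschitzWith L F) (h₁ : IsCharacteristic F X₁ V₁)
    (h₂ : IsCharacteristic F X₂ V₂) {t : ℝ} (ht : 0 ≤ t) :
    dist (X₁ t, V₁ t) (X₂ t, V₂ t) ≤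
      dist (X₁ 0, V₁ 0) (X₂ 0, V₂ 0) * exp (max 1 (L : ℝ) * t) := by
  have hcont {X V : ℝ → E} (h : IsCharacteristic F X V) :
      ContinuousOn (fun s => (X s, V s)) (Icc 0 t) :=
    fun s _ => (h.hasDerivAt_prodMk s).continuousAt.continuousWithinAt
  have := dist_le_of_trajectories_ODE (v := fun _ p => (p.2, F p.1)) (K := max 1 L)
    (fun _ => hF.secondOrderField) (hcont h₁)
    (fun s _ => (h₁.hasDerivAt_prodMk s).hasDerivWithinAt) (hcont h₂)
    (fun s _ => (h₂.hasDerivAt_prodMk s).hasDerivWithinAt) le_rfl t ⟨ht, le_rfl⟩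
  simpa using this

theorem norm_sub_sub_smul_le {L : ℝ≥0} (hF : LipschitzWith L F)
    (h₁ : IsCharacteristic F X₁ V₁) (h₂ : IsCharacteristic F X₂ V₂) (hX : X₁ 0 = X₂ 0)
    {t : ℝ} (ht : 0 ≤ t) :
    ‖X₁ t - X₂ t - t • (V₁ 0 - V₂ 0)‖ ≤
      L * (‖V₁ 0 - V₂ 0‖ * exp (max 1 (L : ℝ) * t)) * t ^ 2 := by
  have hdist : ∀ s ∈ Icc 0 t, ‖X₁ s - X₂ s‖ ≤ ‖V₁ 0 - V₂ 0‖ * exp (max 1 (L : ℝ) * t) := by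
    intro s hs
    calc ‖X₁ s - X₂ s‖ ≤ dist (X₁ s, V₁ s) (X₂ s, V₂ s) := by
          rw [Prod.dist_eq, ← dist_eq_norm]; exact le_max_left _ _
      _ ≤ dist (X₁ 0, V₁ 0) (X₂ 0, V₂ 0) * exp (max 1 (L : ℝ) * s) := h₁.dist_le hF h₂ hs.1
      _ ≤ ‖V₁ 0 - V₂ 0‖ * exp (max 1 (L : ℝ) * t) := by
          rw [Prod.dist_eq, hX, dist_self, max_eq_right dist_nonneg, dist_eq_norm]
          gcongr
          exact hs.2
  have := norm_image_sub_sub_smul_le_of_hasDerivWithinAt (f := X₁ - X₂) (g := V₁ - V₂)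
    (g' := fun s => F (X₁ s) - F (X₂ s)) ht
    (fun s _ => ((h₁ s).1.sub (h₂ s).1).hasDerivWithinAt)
    (fun s _ => ((h₁ s).2.sub (h₂ s).2).hasDerivWithinAt)
    (fun s hs => (hF.norm_sub_le _ _).trans
      (mul_le_mul_of_nonneg_left (hdist s (Ico_subset_Icc_self hs)) L.coe_nonneg))
  simpa only [Pi.sub_apply, hX, sub_self, sub_zero] using this

theorem half_mul_norm_sub_le {L : ℝ≥0} (hF : LipschitzWith L F)
    (h₁ : IsCharacteristic F X₁ V₁) (h₂ : IsCharacteristic F X₂ V₂) (hX : X₁ 0 = X₂ 0)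
    {t : ℝ} (ht : 0 ≤ t) (hsmall : L * t * exp (max 1 (L : ℝ) * t) ≤ 1 / 2) :
    t / 2 * ‖V₁ 0 - V₂ 0‖ ≤ ‖X₁ t - X₂ t‖ := by
  set w := V₁ 0 - V₂ 0
  have hdev : ‖X₁ t - X₂ t - t • w‖ ≤ L * (‖w‖ * exp (max 1 (L : ℝ) * t)) * t ^ 2 :=
    h₁.norm_sub_sub_smul_le hF h₂ hX ht
  have hdev_le : L * (‖w‖ * exp (max 1 (L : ℝ) * t)) * t ^ 2 ≤ t / 2 * ‖w‖ := by
    calc L * (‖w‖ * exp (max 1 (L : ℝ) * t)) * t ^ 2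
        = (L * t * exp (max 1 (L : ℝ) * t)) * (t * ‖w‖) := by ring
      _ ≤ 1 / 2 * (t * ‖w‖) := by gcongr
      _ = t / 2 * ‖w‖ := by ring
  calc t / 2 * ‖w‖ = ‖t • w‖ - t / 2 * ‖w‖ := by
        rw [norm_smul, Real.norm_of_nonneg ht]; ring
    _ ≤ ‖t • w‖ - ‖X₁ t - X₂ t - t • w‖ := by linarith
    _ ≤ ‖X₁ t - X₂ t‖ := by
        have := norm_sub_le (X₁ t - X₂ t) (X₁ t - X₂ t - t • w)
        rw [sub_sub_cancel] at this
        linarith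

end IsCharacteristic

end

theorem mul_mul_exp_le_half {L : ℝ≥0} {t : ℝ} (ht : 0 ≤ t)
    (htτ : t ≤ 1 / (2 * max 1 (L : ℝ) * exp (max 1 (L : ℝ)))) :
    L * t * exp (max 1 (L : ℝ) * t) ≤ 1 / 2 := by
  set K := max 1 (L : ℝ)
  have hK1 : 1 ≤ K := by simp [K]
  have hLK : (L : ℝ) ≤ K := by simp [K]
  have hτ : t * (2 * K * exp K) ≤ 1 := (le_div_iff₀ (by positivity)).1 htτ
  have hτ1 : 1 ≤ 2 * K * exp K := by nlinarith [one_le_exp (zero_le_one.trans hK1)]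
  have ht1 : t ≤ 1 := (le_mul_of_one_le_right ht hτ1).trans hτ
  calc L * t * exp (K * t) ≤ K * t * exp K := by
        gcongr
        exact mul_le_of_le_one_right (zero_le_one.trans hK1) ht1
    _ = t * (2 * K * exp K) / 2 := by ring
    _ ≤ 1 / 2 := by linarith

theorem characteristics_local_injectivity_general (d : ℕ)
    (F : EuclideanSpace ℝ (Fin d) → EuclideanSpace ℝ (Fin d)) (L : ℝ≥0)
    (hF : LipschitzWith L F)
    (X V : ℝ → EuclideanSpace ℝ (Fin d) → EuclideanSpace ℝ (Fin d) → EuclideanSpace ℝ (Fin d))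
    (hX0 : ∀ x v, X 0 x v = x) (hV0 : ∀ x v, V 0 x v = v)
    (hX' : ∀ t x v, HasDerivAt (fun s => X s x v) (V t x v) t)
    (hV' : ∀ t x v, HasDerivAt (fun s => V s x v) (F (X t x v)) t) :
    ∃ τ₀ : ℝ, 0 < τ₀ ∧ ∀ t : ℝ, 0 < t → t ≤ τ₀ →
      (∀ x v v', (t / 2) * ‖v - v'‖ ≤ ‖X (-t) x v' - X (-t) x v‖) ∧
      (∀ x, Function.Injective (fun v => X (-t) x v)) := by
  refine ⟨1 / (2 * max 1 (L : ℝ) * exp (max 1 (L : ℝ))), by positivity, fun t ht htτ => ?_⟩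
  have hbackward : ∀ x v, IsCharacteristic F (fun s => X (-s) x v) (fun s => -V (-s) x v) :=
    fun x v => IsCharacteristic.comp_neg fun t => ⟨hX' t x v, hV' t x v⟩
  have hbound : ∀ x v v', t / 2 * ‖v - v'‖ ≤ ‖X (-t) x v' - X (-t) x v‖ := fun x v v' => by
    simpa [hX0, hV0, neg_add_eq_sub] using (hbackward x v').half_mul_norm_sub_le hF
      (hbackward x v) (by simp [hX0]) ht.le (mul_mul_exp_le_half ht.le htτ)
  refine ⟨hbound, fun x v v' hvv => ?_⟩
  have := hbound x v v'
  rw [show X (-t) x v' = X (-t) x v from hvv.symm, sub_self, norm_zero] at this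
  exact sub_eq_zero.1 (norm_le_zero_iff.1 (nonpos_of_mul_nonpos_right this (by positivity)))

/-- Local-in-time injectivity of `v ↦ X(-t;x,v)`: there exists `τ₀ > 0` such that for
`0 < t ≤ τ₀`, `|X(-t;x,v') - X(-t;x,v)| ≥ (t/2)|v - v'|`; in particular the map is injective. -/
theorem characteristics_local_injectivity (d : ℕ) (hd : 1 ≤ d)
    (F : EuclideanSpace ℝ (Fin d) → EuclideanSpace ℝ (Fin d)) (L : ℝ≥0)
    (hF : LipschitzWith L F)
    (X V : ℝ → EuclideanSpace ℝ (Fin d) → EuclideanSpace ℝ (Fin d) → EuclideanSpace ℝ (Fin d))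
    (hX0 : ∀ x v, X 0 x v = x) (hV0 : ∀ x v, V 0 x v = v)
    (hX' : ∀ t x v, HasDerivAt (fun s => X s x v) (V t x v) t)
    (hV' : ∀ t x v, HasDerivAt (fun s => V s x v) (F (X t x v)) t) :
    ∃ τ₀ : ℝ, 0 < τ₀ ∧ ∀ t : ℝ, 0 < t → t ≤ τ₀ →
      (∀ x v v', (t / 2) * ‖v - v'‖ ≤ ‖X (-t) x v' - X (-t) x v‖) ∧
      (∀ x, Function.Injective (fun v => X (-t) x v)) :=
  characteristics_local_injectivity_general d F L hF X V hX0 hV0 hX' hV'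
end

section
/- Let (gₑ) be a bounded family in L¹(K) (K ⊂ ℝ^d × ℝ^d compact) that is equiintegrable in v, and suppose that for every nonnegative Ψ ∈ C¹_c(ℝ^d) the family of functions x ↦ ∫ |gₑ(x,v)| Ψ(v) dv is equiintegrable in x. Then (gₑ) is equiintegrable jointly in (x,v): for every η > 0 there is α > 0 such that for any measurable B ⊂ ℝ^{2d} with |B| < α, ∫_B |gₑ| dx dv ≤ η for all ε. -/
open MeasureTheory Set
open scoped ENNReal

/-!
Split `B` according to the size of its vertical slices `B_x = {v | (x, v) ∈ B}`. Over the
`x` with `|B_x| < α₁`, equiintegrability in `v` bounds the integral. By Chebyshev, the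
remaining `x` form a set of measure at most `|B| / α₁`, small when `|B| < α₁ α₂`; there the
integral is bounded by the moment `∫ |g(x,v)| Ψ(v) dv` for a bump `Ψ` equal to `1` on the
`v`-projection of `K`, which is equiintegrable in `x`.
-/

section Slices

variable {α β : Type*} [MeasurableSpace α] [MeasurableSpace β] {μ : Measure α} {ν : Measure β}
  [SFinite ν]

theorem setLIntegral_prod_eq_lintegral_slice {f : α × β → ℝ≥0∞} (hf : Measurable f)
    {B : Set (α × β)} (hB : MeasurableSet B) :
    ∫⁻ z in B, f z ∂μ.prod ν = ∫⁻ x, ∫⁻ v in Prod.mk x ⁻¹' B, f (x, v) ∂ν ∂μ := by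
  rw [← lintegral_indicator hB, lintegral_prod _ (hf.indicator hB).aemeasurable]
  refine lintegral_congr fun x => ?_
  rw [← lintegral_indicator (measurable_prodMk_left hB)]
  rfl

theorem mul_measure_setOf_le_measure_slice_le_prod {B : Set (α × β)} (hB : MeasurableSet B)
    (c : ℝ≥0∞) : c * μ {x | c ≤ ν (Prod.mk x ⁻¹' B)} ≤ μ.prod ν B := by
  rw [Measure.prod_apply hB]
  exact mul_meas_ge_le_lintegral₀ (measurable_measure_prodMk_left hB).aemeasurable c

theorem setLIntegral_prod_le_of_slices_of_marginals [SFinite μ] {f : α × β → ℝ≥0∞}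
    (hf : Measurable f) {c₁ c₂ a₁ a₂ : ℝ≥0∞} (hc₁ : 0 < c₁)
    (hslice : ∀ A : α → Set β, (∀ x, MeasurableSet (A x)) → (∀ x, ν (A x) < c₁) →
      ∫⁻ x, ∫⁻ v in A x, f (x, v) ∂ν ∂μ ≤ a₁)
    (hmarg : ∀ s, MeasurableSet s → μ s < c₂ → ∫⁻ x in s, ∫⁻ v, f (x, v) ∂ν ∂μ ≤ a₂)
    {B : Set (α × β)} (hB : MeasurableSet B) (hBc : μ.prod ν B < c₁ * c₂) :
    ∫⁻ z in B, f z ∂μ.prod ν ≤ a₁ + a₂ := by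
  set E := {x | ν (Prod.mk x ⁻¹' B) < c₁}
  have hE : MeasurableSet E := measurable_measure_prodMk_left hB measurableSet_Iio
  have hEc : μ Eᶜ < c₂ := by
    have hEc_eq : Eᶜ = {x | c₁ ≤ ν (Prod.mk x ⁻¹' B)} := by ext; simp [E]
    refine lt_of_mul_lt_mul_left (a := c₁) ?_ zero_le
    rw [hEc_eq]
    exact (mul_measure_setOf_le_measure_slice_le_prod hB c₁).trans_lt hBc
  rw [← lintegral_inter_add_sdiff f B (measurable_fst hE)]
  gcongr
  · rw [setLIntegral_prod_eq_lintegral_slice hf (hB.inter (measurable_fst hE))]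
    refine hslice _ (fun x => measurable_prodMk_left (hB.inter (measurable_fst hE))) fun x => ?_
    by_cases hx : x ∈ E
    · exact (measure_mono fun v hv => hv.1).trans_lt hx
    · have hempty : Prod.mk x ⁻¹' (B ∩ Prod.fst ⁻¹' E) = ∅ := by ext; simp [hx]
      simpa [hempty] using hc₁
  · calc ∫⁻ z in B \ Prod.fst ⁻¹' E, f z ∂μ.prod ν
        ≤ ∫⁻ z in Eᶜ ×ˢ univ, f z ∂μ.prod ν := lintegral_mono_set fun z hz => ⟨hz.2, trivial⟩
      _ = ∫⁻ x in Eᶜ, ∫⁻ v, f (x, v) ∂ν ∂μ := by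
        rw [setLIntegral_prod _ hf.aemeasurable, Measure.restrict_univ]
      _ ≤ a₂ := hmarg _ hE.compl hEc

end Slices

theorem exists_contDiff_hasCompactSupport_nonneg_eq_one {E : Type*} [NormedAddCommGroup E]
    [NormedSpace ℝ E] [FiniteDimensional ℝ E] {S : Set E} (hS : Bornology.IsBounded S)
    {n : ℕ∞} : ∃ Ψ : E → ℝ, ContDiff ℝ n Ψ ∧ HasCompactSupport Ψ ∧ (∀ v, 0 ≤ Ψ v) ∧
      ∀ v ∈ S, Ψ v = 1 := by
  obtain ⟨r, hr, hSr⟩ := hS.subset_closedBall_lt 0 0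
  let Ψ : ContDiffBump (0 : E) := ⟨r, r + 1, hr, by linarith⟩
  exact ⟨Ψ, Ψ.contDiff, Ψ.hasCompactSupport, fun _ => Ψ.nonneg,
    fun v hv => Ψ.one_of_mem_closedBall (hSr hv)⟩

theorem equiintegrable_v_and_moments_implies_xv_general (d : ℕ)
    {ι : Type*}
    (g : ι → EuclideanSpace ℝ (Fin d) × EuclideanSpace ℝ (Fin d) → ℝ)
    (K : Set (EuclideanSpace ℝ (Fin d) × EuclideanSpace ℝ (Fin d)))
    (hK : IsCompact K)
    (hgm : ∀ e, Measurable (g e))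
    (hsupp : ∀ e, Function.support (g e) ⊆ K)
    (hequiv : ∀ η : ℝ, 0 < η → ∃ α₁ : ℝ, 0 < α₁ ∧
      ∀ A : EuclideanSpace ℝ (Fin d) → Set (EuclideanSpace ℝ (Fin d)),
        (∀ x, MeasurableSet (A x)) → (∀ x, volume (A x) < ENNReal.ofReal α₁) →
        ∀ e, ∫⁻ x, ∫⁻ v in A x, (‖g e (x, v)‖₊ : ℝ≥0∞) ≤ ENNReal.ofReal η)
    (hmom : ∀ Ψ : EuclideanSpace ℝ (Fin d) → ℝ,
      ContDiff ℝ 1 Ψ → HasCompactSupport Ψ → (∀ v, 0 ≤ Ψ v) →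
      ∀ η : ℝ, 0 < η → ∃ α₂ : ℝ, 0 < α₂ ∧
        ∀ A : Set (EuclideanSpace ℝ (Fin d)), MeasurableSet A →
          volume A < ENNReal.ofReal α₂ →
          ∀ e, ∫⁻ x in A, ∫⁻ v, (‖g e (x, v)‖₊ : ℝ≥0∞) * ENNReal.ofReal (Ψ v)
            ≤ ENNReal.ofReal η) :
    ∀ η : ℝ, 0 < η → ∃ α : ℝ, 0 < α ∧
      ∀ B : Set (EuclideanSpace ℝ (Fin d) × EuclideanSpace ℝ (Fin d)),
        MeasurableSet B → volume B < ENNReal.ofReal α →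
        ∀ e, ∫⁻ y in B, (‖g e y‖₊ : ℝ≥0∞) ≤ ENNReal.ofReal η := by
  intro η hη
  obtain ⟨α₁, hα₁, hslice⟩ := hequiv (η / 2) (by positivity)
  obtain ⟨Ψ, hΨ, hΨc, hΨ0, hΨ1⟩ :=
    exists_contDiff_hasCompactSupport_nonneg_eq_one (hK.image continuous_snd).isBounded (n := 1)
  obtain ⟨α₂, hα₂, hmarg⟩ := hmom Ψ hΨ hΨc hΨ0 (η / 2) (by positivity)
  refine ⟨α₁ * α₂, by positivity, fun B hB hBvol e => ?_⟩
  have hweight (x) : ∫⁻ v, (‖g e (x, v)‖₊ : ℝ≥0∞) ≤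
      ∫⁻ v, (‖g e (x, v)‖₊ : ℝ≥0∞) * ENNReal.ofReal (Ψ v) := by
    refine lintegral_mono fun v => ?_
    by_cases hg : g e (x, v) = 0
    · simp [hg]
    · simp [hΨ1 v ⟨(x, v), hsupp e hg, rfl⟩]
  rw [Measure.volume_eq_prod] at hBvol ⊢
  calc ∫⁻ y in B, (‖g e y‖₊ : ℝ≥0∞) ∂volume.prod volume
      ≤ ENNReal.ofReal (η / 2) + ENNReal.ofReal (η / 2) :=
        setLIntegral_prod_le_of_slices_of_marginals (hgm e).nnnorm.coe_nnreal_ennreal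
          (ENNReal.ofReal_pos.2 hα₁) (fun A hA hAv => hslice A hA hAv e)
          (fun s hs hsv => (lintegral_mono hweight).trans (hmarg s hs hsv e)) hB
          (by rwa [← ENNReal.ofReal_mul hα₁.le])
    _ = ENNReal.ofReal η := by rw [← ENNReal.ofReal_add (by positivity) (by positivity)]; ring_nf

/-- If a family `(gₑ)`, bounded in `L¹` and supported in a fixed compact set
`K ⊂ ℝ^d × ℝ^d`, is equiintegrable in `v`, and if for every nonnegative
`Ψ ∈ C¹_c` the moments `x ↦ ∫ |gₑ(x,v)| Ψ(v) dv` are equiintegrable in `x`,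
then `(gₑ)` is equiintegrable jointly in `(x,v)`. -/
theorem equiintegrable_v_and_moments_implies_xv (d : ℕ) (hd : 1 ≤ d)
    {ι : Type*}
    (g : ι → EuclideanSpace ℝ (Fin d) × EuclideanSpace ℝ (Fin d) → ℝ)
    (K : Set (EuclideanSpace ℝ (Fin d) × EuclideanSpace ℝ (Fin d)))
    (hK : IsCompact K)
    (hgm : ∀ e, Measurable (g e))
    (hsupp : ∀ e, Function.support (g e) ⊆ K)
    (hbdd : ∃ C : ℝ, ∀ e, ∫⁻ y, (‖g e y‖₊ : ℝ≥0∞) ≤ ENNReal.ofReal C)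
    (hequiv : ∀ η : ℝ, 0 < η → ∃ α₁ : ℝ, 0 < α₁ ∧
      ∀ A : EuclideanSpace ℝ (Fin d) → Set (EuclideanSpace ℝ (Fin d)),
        (∀ x, MeasurableSet (A x)) → (∀ x, volume (A x) < ENNReal.ofReal α₁) →
        ∀ e, ∫⁻ x, ∫⁻ v in A x, (‖g e (x, v)‖₊ : ℝ≥0∞) ≤ ENNReal.ofReal η)
    (hmom : ∀ Ψ : EuclideanSpace ℝ (Fin d) → ℝ,
      ContDiff ℝ 1 Ψ → HasCompactSupport Ψ → (∀ v, 0 ≤ Ψ v) →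
      ∀ η : ℝ, 0 < η → ∃ α₂ : ℝ, 0 < α₂ ∧
        ∀ A : Set (EuclideanSpace ℝ (Fin d)), MeasurableSet A →
          volume A < ENNReal.ofReal α₂ →
          ∀ e, ∫⁻ x in A, ∫⁻ v, (‖g e (x, v)‖₊ : ℝ≥0∞) * ENNReal.ofReal (Ψ v)
            ≤ ENNReal.ofReal η) :
    ∀ η : ℝ, 0 < η → ∃ α : ℝ, 0 < α ∧
      ∀ B : Set (EuclideanSpace ℝ (Fin d) × EuclideanSpace ℝ (Fin d)),
        MeasurableSet B → volume B < ENNReal.ofReal α →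
        ∀ e, ∫⁻ y in B, (‖g e y‖₊ : ℝ≥0∞) ≤ ENNReal.ofReal η :=
  equiintegrable_v_and_moments_implies_xv_general d g K hK hgm hsupp hequiv hmom
end
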